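/- Let s_1 > 0 > s_2. Then the Fourier transform F : H^{s_1}(ℝ^n) → H^{s_2}(ℝ^n) is a compact operator. -/

import Mathlib

open MeasureTheory Complex Real ENNReal NNReal Filter

noncomputable section

/-- The Fourier transform `(Fφ)(ξ) = (2π)^{-n/2} ∫ e^{-i x·ξ} φ(x) dx` on `ℝⁿ`. -/
def FT (n : ℕ) (f : EuclideanSpace ℝ (Fin n) → ℂ) :
    EuclideanSpace ℝ (Fin n) → ℂ := fun ξ =>
  ((2 * Real.pi) ^ (-(n : ℝ) / 2) : ℝ) •
    ∫ x : EuclideanSpace ℝ (Fin n),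
      Complex.exp (-Complex.I * ((inner ℝ x ξ : ℝ) : ℂ)) * f x

/-- The weight `w_s(x) = (1 + |x|²)^{s/2}`. -/
def wgt (n : ℕ) (s : ℝ) (x : EuclideanSpace ℝ (Fin n)) : ℝ :=
  (1 + ‖x‖ ^ 2) ^ (s / 2)

/-!
Write `T g = w_{s₂} · Φ g`. The `H^{s₁}`-unit ball `A = {g : ‖w_{s₁} g‖₂ ≤ 1}` is a set of
`L²` functions that are small outside a large ball `B`, since `w_{s₁} → ∞`; and `w_{s₂}` is small
outside a large ball `K`, since `s₂ < 0`. Up to any prescribed error, `T` on `A` is therefore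
`g ↦ w_{s₂} 1_K F(1_B g)`. For `‖g‖₂ ≤ 1` the functions `1_B g` are bounded in `L¹` and
supported in `B`, so their Fourier transforms are uniformly bounded and equi-Lipschitz; by
Arzelà–Ascoli their restrictions to `K` form a totally bounded set of continuous functions,
and `‖1_K φ‖₂ ≤ |K|^{1/2} sup_K |φ|` carries this over to `L²`. Hence `T '' A` is totally
bounded.
-/

open Metric Set
open scoped BoundedContinuousFunction

section TotallyBounded

variable {α β γ : Type*} [PseudoMetricSpace α] [PseudoMetricSpace β]

theorem Metric.totallyBounded_of_forall_exists_dist_le {s : Set α}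
    (h : ∀ δ > 0, ∃ t, TotallyBounded t ∧ ∀ x ∈ s, ∃ y ∈ t, dist x y ≤ δ) :
    TotallyBounded s := by
  refine totallyBounded_iff.2 fun ε hε => ?_
  obtain ⟨t, ht, hst⟩ := h (ε / 2) (half_pos hε)
  obtain ⟨u, hu, htu⟩ := totallyBounded_iff.1 ht (ε / 2) (half_pos hε)
  refine ⟨u, hu, fun x hx => ?_⟩
  obtain ⟨y, hy, hxy⟩ := hst x hx
  obtain ⟨z, hz, hyz⟩ := mem_iUnion₂.1 (htu hy)
  refine mem_iUnion₂.2 ⟨z, hz, mem_ball.2 ?_⟩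
  linarith [dist_triangle x y z, mem_ball.1 hyz]

theorem TotallyBounded.image_of_dist_le_mul {f : γ → α} {g : γ → β} {s : Set γ}
    (hg : TotallyBounded (g '' s)) (C : ℝ≥0)
    (hfg : ∀ x ∈ s, ∀ y ∈ s, dist (f x) (f y) ≤ C * dist (g x) (g y)) :
    TotallyBounded (f '' s) := by
  refine totallyBounded_iff.2 fun ε hε => ?_
  have hη : 0 < ε / (C + 1) := by positivity
  obtain ⟨t, hts, ht, hcover⟩ :=
    exists_subset_image_finite_and.1 (finite_approx_of_totallyBounded hg _ hη)
  refine ⟨f '' t, ht.image f, ?_⟩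
  rintro _ ⟨x, hx, rfl⟩
  obtain ⟨_, ⟨y, hy, rfl⟩, hxy⟩ := mem_iUnion₂.1 (hcover (mem_image_of_mem g hx))
  refine mem_iUnion₂.2 ⟨f y, mem_image_of_mem f hy, ?_⟩
  calc dist (f x) (f y) ≤ C * dist (g x) (g y) := hfg x hx y (hts hy)
    _ ≤ C * (ε / (C + 1)) := by gcongr; exact (mem_ball.1 hxy).le
    _ < ε := by
      rw [mul_div_assoc', div_lt_iff₀ (by positivity)]
      nlinarith

theorem TotallyBounded.exists_finset_edist_image_lt {X Y : Type*} [PseudoEMetricSpace Y]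
    {f : X → Y} {s : Set X} (hs : TotallyBounded (f '' s)) {ε : ℝ≥0∞} (hε : 0 < ε) :
    ∃ S : Finset X, ∀ x ∈ s, ∃ y ∈ S, edist (f x) (f y) < ε := by
  obtain ⟨t, -, ht, hcover⟩ :=
    exists_subset_image_finite_and.1 (EMetric.totallyBounded_iff'.1 hs ε hε)
  refine ⟨ht.toFinset, fun x hx => ?_⟩
  obtain ⟨_, ⟨y, hy, rfl⟩, hxy⟩ := mem_iUnion₂.1 (hcover (mem_image_of_mem f hx))
  exact ⟨y, ht.mem_toFinset.2 hy, hxy⟩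

theorem BoundedContinuousFunction.totallyBounded_setOf_lipschitzWith {X Y : Type*}
    [PseudoMetricSpace X] [CompactSpace X] [MetricSpace Y] {K : Set Y} (hK : IsCompact K)
    (L : ℝ≥0) : TotallyBounded {f : X →ᵇ Y | LipschitzWith L f ∧ ∀ x, f x ∈ K} :=
  (arzela_ascoli K hK _ (fun _ x hf => hf.2 x)
    (LipschitzWith.uniformEquicontinuous _ L fun f => f.2.1).equicontinuous).totallyBounded.subset
    subset_closure

end TotallyBounded

section Multiplication

variable {X : Type*} [MeasurableSpace X] {μ : Measure X}

namespace MeasureTheory.Lp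

def mulL (a : Lp ℂ ∞ μ) : Lp ℂ 2 μ →L[ℂ] Lp ℂ 2 μ :=
  (ContinuousLinearMap.mul ℂ ℂ).holderL μ ∞ 2 2 a

theorem coeFn_mulL (a : Lp ℂ ∞ μ) (f : Lp ℂ 2 μ) : mulL a f =ᵐ[μ] fun x => a x * f x :=
  (ContinuousLinearMap.mul ℂ ℂ).coeFn_holder a f

theorem coeFn_mulL_indicatorConstLp {s : Set X} (hs : MeasurableSet s) (hμs : μ s ≠ ∞)
    (f : Lp ℂ 2 μ) : mulL (indicatorConstLp ∞ hs hμs (1 : ℂ)) f =ᵐ[μ] s.indicator f := by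
  filter_upwards [coeFn_mulL (indicatorConstLp ∞ hs hμs (1 : ℂ)) f,
    indicatorConstLp_coeFn (p := ∞) (hs := hs) (hμs := hμs) (c := (1 : ℂ))] with x hx h1
  rw [hx, h1]
  by_cases hxs : x ∈ s <;> simp [hxs]

end MeasureTheory.Lp

variable {E : Type*} [NormedAddCommGroup E] {s : Set X}

theorem MeasureTheory.MemLp.integrable_indicator {f : X → E} (hf : MemLp f 2 μ)
    (hs : MeasurableSet s) (hμs : μ s ≠ ∞) : Integrable (s.indicator f) μ := by
  have : IsFiniteMeasure (μ.restrict s) := isFiniteMeasure_restrict.2 hμs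
  exact (integrable_indicator_iff hs).2 ((hf.restrict s).integrable one_le_two)

theorem MeasureTheory.Lp.integral_norm_indicator_le (f : Lp E 2 μ) (hs : MeasurableSet s)
    (hμs : μ s ≠ ∞) : ∫ x, ‖s.indicator f x‖ ∂μ ≤ ‖f‖ * (μ s ^ (1 / 2 : ℝ)).toReal := by
  rw [integral_norm_eq_lintegral_enorm ((Lp.memLp f).integrable_indicator hs hμs).1,
    ← eLpNorm_one_eq_lintegral_enorm, eLpNorm_indicator_eq_eLpNorm_restrict hs, Lp.norm_def,
    ← ENNReal.toReal_mul]
  refine ENNReal.toReal_mono (by finiteness [Lp.eLpNorm_ne_top f]) ?_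
  calc eLpNorm f 1 (μ.restrict s) ≤ eLpNorm f 2 (μ.restrict s) * μ s ^ (1 / 2 : ℝ) := by
        convert eLpNorm_le_eLpNorm_mul_rpow_measure_univ one_le_two
          (Lp.aestronglyMeasurable f).restrict using 2; norm_num
    _ ≤ eLpNorm f 2 μ * μ s ^ (1 / 2 : ℝ) := by
        gcongr
        exact Measure.restrict_le_self

end Multiplication

variable {n : ℕ}

section Weight

variable {s : ℝ}

theorem wgt_pos (x : EuclideanSpace ℝ (Fin n)) : 0 < wgt n s x := by
  unfold wgt; positivity

theorem continuous_wgt : Continuous (wgt n s) :=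
  (continuous_const.add (continuous_norm.pow 2)).rpow_const fun x =>
    Or.inl (by positivity : (0 : ℝ) < 1 + ‖x‖ ^ 2).ne'

theorem one_le_wgt (hs : 0 ≤ s) (x : EuclideanSpace ℝ (Fin n)) : 1 ≤ wgt n s x :=
  Real.one_le_rpow (by nlinarith [sq_nonneg ‖x‖]) (by linarith)

theorem wgt_le_one (hs : s ≤ 0) (x : EuclideanSpace ℝ (Fin n)) : wgt n s x ≤ 1 :=
  Real.rpow_le_one_of_one_le_of_nonpos (by nlinarith [sq_nonneg ‖x‖]) (by linarith)

theorem wgt_neg (x : EuclideanSpace ℝ (Fin n)) : wgt n (-s) x = (wgt n s x)⁻¹ := by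
  rw [wgt, wgt, neg_div, Real.rpow_neg (by positivity)]

theorem wgt_le_of_rpow_inv_le_norm (hs : s < 0) {δ : ℝ} (hδ : 0 < δ)
    {x : EuclideanSpace ℝ (Fin n)} (hx : δ ^ s⁻¹ ≤ ‖x‖) : wgt n s x ≤ δ :=
  calc wgt n s x ≤ (‖x‖ ^ 2) ^ (s / 2) :=
        Real.rpow_le_rpow_of_nonpos (by positivity [(Real.rpow_pos_of_pos hδ s⁻¹).trans_le hx])
          (by linarith) (by linarith)
    _ = ‖x‖ ^ s := by rw [← Real.rpow_natCast, ← Real.rpow_mul (norm_nonneg x)]; ring_nf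
    _ ≤ (δ ^ s⁻¹) ^ s := Real.rpow_le_rpow_of_nonpos (Real.rpow_pos_of_pos hδ _) hx hs.le
    _ = δ := by rw [← Real.rpow_mul hδ.le, inv_mul_cancel₀ hs.ne, Real.rpow_one]

theorem memLp_top_wgt (hs : s ≤ 0) :
    MemLp (fun x => (wgt n s x : ℂ)) ∞ (volume : Measure (EuclideanSpace ℝ (Fin n))) :=
  memLp_top_of_bound (Complex.continuous_ofReal.comp continuous_wgt).aestronglyMeasurable 1
    (ae_of_all _ fun x => by simpa [abs_of_pos (wgt_pos x)] using wgt_le_one hs x)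

theorem eLpNorm_le_eLpNorm_wgt_mul (hs : 0 ≤ s) (f : EuclideanSpace ℝ (Fin n) → ℂ)
    (p : ℝ≥0∞) : eLpNorm f p volume ≤ eLpNorm (fun x => (wgt n s x : ℂ) * f x) p volume :=
  eLpNorm_mono fun x => by
    rw [norm_mul, Complex.norm_real, Real.norm_of_nonneg (wgt_pos x).le]
    exact le_mul_of_one_le_left (norm_nonneg _) (one_le_wgt hs x)

end Weight

section Fourier

theorem norm_FT_le (f : EuclideanSpace ℝ (Fin n) → ℂ) (ξ : EuclideanSpace ℝ (Fin n)) :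
    ‖FT n f ξ‖ ≤ (2 * π) ^ (-(n : ℝ) / 2) * ∫ x, ‖f x‖ := by
  rw [FT, norm_smul, Real.norm_of_nonneg (by positivity)]
  gcongr
  refine (norm_integral_le_integral_norm _).trans_eq ?_
  simp [Complex.norm_exp]

theorem norm_exp_neg_I_mul_sub_le (a b : ℝ) :
    ‖Complex.exp (-Complex.I * a) - Complex.exp (-Complex.I * b)‖ ≤ |a - b| := by
  have : Complex.exp (-Complex.I * a) - Complex.exp (-Complex.I * b)
      = Complex.exp (-Complex.I * a) * (1 - Complex.exp (Complex.I * ↑(a - b))) := by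
    rw [mul_sub, mul_one, ← Complex.exp_add]; push_cast; ring_nf
  rw [this, norm_mul, norm_sub_rev]
  simpa [Complex.norm_exp] using norm_exp_I_mul_ofReal_sub_one_le (x := a - b)

theorem dist_FT_le {f : EuclideanSpace ℝ (Fin n) → ℂ} (hf : Integrable f) {R : ℝ}
    (hR : ∀ x, f x ≠ 0 → ‖x‖ ≤ R) (ξ η : EuclideanSpace ℝ (Fin n)) :
    dist (FT n f ξ) (FT n f η) ≤ (2 * π) ^ (-(n : ℝ) / 2) * (R * ∫ x, ‖f x‖) * dist ξ η := by
  have hint : ∀ ζ : EuclideanSpace ℝ (Fin n),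
      Integrable (fun x => Complex.exp (-Complex.I * ((inner ℝ x ζ : ℝ) : ℂ)) * f x) := fun ζ =>
    hf.bdd_mul (c := 1) (by fun_prop) (ae_of_all _ fun x => by simp [Complex.norm_exp])
  have hpt : ∀ x, ‖Complex.exp (-Complex.I * ((inner ℝ x ξ : ℝ) : ℂ)) * f x
      - Complex.exp (-Complex.I * ((inner ℝ x η : ℝ) : ℂ)) * f x‖ ≤ R * dist ξ η * ‖f x‖ := by
    intro x
    by_cases hx : f x = 0
    · simp [hx]
    rw [← sub_mul, norm_mul, dist_eq_norm]
    gcongr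
    calc _ ≤ |inner ℝ x ξ - inner ℝ x η| := norm_exp_neg_I_mul_sub_le _ _
      _ = |inner ℝ x (ξ - η)| := by rw [inner_sub_right]
      _ ≤ ‖x‖ * ‖ξ - η‖ := abs_real_inner_le_norm x (ξ - η)
      _ ≤ R * ‖ξ - η‖ := by gcongr; exact hR x hx
  rw [dist_eq_norm, FT, FT, ← smul_sub, ← integral_sub (hint ξ) (hint η), norm_smul,
    Real.norm_of_nonneg (by positivity), mul_assoc, mul_assoc]
  gcongr
  calc _ ≤ ∫ x, R * dist ξ η * ‖f x‖ :=
        norm_integral_le_of_norm_le (hf.norm.const_mul _) (ae_of_all _ hpt)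
    _ = _ := by rw [integral_const_mul]; ring

end Fourier

section Operators

local notation "𝔼" => EuclideanSpace ℝ (Fin n)
local notation "𝕃²" => Lp ℂ 2 (volume : Measure (EuclideanSpace ℝ (Fin n)))

def IsFourierExtension (Φ : 𝕃² ≃ₗᵢ[ℂ] 𝕃²) : Prop :=
  ∀ (f : 𝔼 → ℂ), Integrable f volume → ∀ (hf : MemLp f 2 volume),
    (Φ (hf.toLp f) : 𝔼 → ℂ) =ᵐ[volume] FT n f

variable (n) in
def ballCutoff (R : ℝ) : 𝕃² →L[ℂ] 𝕃² :=
  Lp.mulL (indicatorConstLp ∞ (measurableSet_closedBall (x := 0) (ε := R))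
    measure_closedBall_lt_top.ne (1 : ℂ))

variable (n) in
def wgtMul {s : ℝ} (hs : s ≤ 0) : 𝕃² →L[ℂ] 𝕃² :=
  Lp.mulL ((memLp_top_wgt hs).toLp _)

theorem coeFn_ballCutoff (R : ℝ) (f : 𝕃²) :
    ballCutoff n R f =ᵐ[volume] (closedBall 0 R).indicator f := by
  unfold ballCutoff
  exact Lp.coeFn_mulL_indicatorConstLp _ _ f

theorem norm_ballCutoff_le (R : ℝ) (f : 𝕃²) : ‖ballCutoff n R f‖ ≤ ‖f‖ :=
  Lp.norm_le_norm_of_ae_le <| (coeFn_ballCutoff R f).mono fun x hx => by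
    rw [hx]; exact norm_indicator_le_norm_self _ x

theorem coeFn_wgtMul {s : ℝ} (hs : s ≤ 0) (f : 𝕃²) :
    wgtMul n hs f =ᵐ[volume] fun x => (wgt n s x : ℂ) * f x := by
  unfold wgtMul
  filter_upwards [Lp.coeFn_mulL ((memLp_top_wgt hs).toLp _) f, (memLp_top_wgt hs).coeFn_toLp]
    with x hx hw
  rw [hx, hw]

theorem norm_wgtMul_le {s : ℝ} (hs : s ≤ 0) (f : 𝕃²) : ‖wgtMul n hs f‖ ≤ ‖f‖ :=
  Lp.norm_le_norm_of_ae_le <| (coeFn_wgtMul hs f).mono fun x hx => by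
    rw [hx, norm_mul, Complex.norm_real, Real.norm_of_nonneg (wgt_pos x).le]
    exact mul_le_of_le_one_left (norm_nonneg _) (wgt_le_one hs x)

theorem enorm_sub_ballCutoff_le {s δ : ℝ} (hs : 0 < s) (hδ : 0 < δ) (f : 𝕃²) :
    ‖f - ballCutoff n (δ ^ (-s)⁻¹) f‖ₑ
      ≤ ENNReal.ofReal δ * eLpNorm (fun x => (wgt n s x : ℂ) * f x) 2 volume := by
  rw [Lp.enorm_def]
  refine eLpNorm_le_mul_eLpNorm_of_ae_le_mul ?_ 2
  filter_upwards [Lp.coeFn_sub f (ballCutoff n (δ ^ (-s)⁻¹) f),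
    coeFn_ballCutoff (δ ^ (-s)⁻¹) f] with x h1 h2
  rw [h1, Pi.sub_apply, h2, norm_mul, Complex.norm_real, Real.norm_of_nonneg (wgt_pos x).le]
  by_cases hx : x ∈ closedBall (0 : 𝔼) (δ ^ (-s)⁻¹)
  · rw [indicator_of_mem hx, sub_self, norm_zero]
    exact mul_nonneg hδ.le (mul_nonneg (wgt_pos x).le (norm_nonneg _))
  · rw [indicator_of_notMem hx, sub_zero]
    rw [mem_closedBall_zero_iff, not_le] at hx
    have hw : wgt n (-s) x ≤ δ := wgt_le_of_rpow_inv_le_norm (neg_neg_of_pos hs) hδ hx.le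
    rw [wgt_neg, inv_le_iff_one_le_mul₀ (wgt_pos x)] at hw
    nlinarith [norm_nonneg (f x)]

theorem norm_wgtMul_sub_ballCutoff_le {s δ : ℝ} (hs : s < 0) (hδ : 0 < δ) (f : 𝕃²) :
    ‖wgtMul n hs.le (f - ballCutoff n (δ ^ s⁻¹) f)‖ ≤ δ * ‖f‖ := by
  refine Lp.norm_le_mul_norm_of_ae_le_mul ?_
  filter_upwards [coeFn_wgtMul hs.le (f - ballCutoff n (δ ^ s⁻¹) f),
    Lp.coeFn_sub f (ballCutoff n (δ ^ s⁻¹) f), coeFn_ballCutoff (δ ^ s⁻¹) f] with x h1 h2 h3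
  rw [h1, h2, Pi.sub_apply, h3, norm_mul, Complex.norm_real, Real.norm_of_nonneg (wgt_pos x).le]
  by_cases hx : x ∈ closedBall (0 : 𝔼) (δ ^ s⁻¹)
  · rw [indicator_of_mem hx, sub_self, norm_zero, mul_zero]
    exact mul_nonneg hδ.le (norm_nonneg _)
  · rw [indicator_of_notMem hx, sub_zero]
    gcongr
    rw [mem_closedBall_zero_iff, not_le] at hx
    exact wgt_le_of_rpow_inv_le_norm hs hδ hx.le

theorem lipschitzWith_FT_indicator_closedBall (R : ℝ) (f : 𝕃²) :
    LipschitzWith ((2 * π) ^ (-(n : ℝ) / 2) * (R * ∫ x, ‖(closedBall 0 R).indicator f x‖)).toNNReal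
      (FT n ((closedBall 0 R).indicator f)) :=
  LipschitzWith.of_dist_le' <| dist_FT_le ((Lp.memLp f).integrable_indicator
    measurableSet_closedBall measure_closedBall_lt_top.ne) fun _ hx =>
      mem_closedBall_zero_iff.1 (support_indicator_subset hx)

theorem IsFourierExtension.ballCutoff_ae_eq {Φ : 𝕃² ≃ₗᵢ[ℂ] 𝕃²} (hΦ : IsFourierExtension Φ)
    (R R' : ℝ) (f : 𝕃²) :
    ballCutoff n R' (Φ (ballCutoff n R f))
      =ᵐ[volume] (closedBall 0 R').indicator (FT n ((closedBall 0 R).indicator f)) := by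
  have hmem := (Lp.memLp f).indicator (measurableSet_closedBall (x := (0 : 𝔼)) (ε := R))
  have hFT : Φ (ballCutoff n R f) =ᵐ[volume] FT n ((closedBall 0 R).indicator f) := by
    rw [Lp.ext ((coeFn_ballCutoff R f).trans hmem.coeFn_toLp.symm)]
    exact hΦ _ ((Lp.memLp f).integrable_indicator measurableSet_closedBall
      measure_closedBall_lt_top.ne) hmem
  filter_upwards [coeFn_ballCutoff R' (Φ (ballCutoff n R f)), hFT] with x h1 h2
  by_cases hx : x ∈ closedBall (0 : 𝔼) R'
  · rw [h1, indicator_of_mem hx, indicator_of_mem hx, h2]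
  · rw [h1, indicator_of_notMem hx, indicator_of_notMem hx]

theorem totallyBounded_ballCutoff_fourier_ballCutoff {Φ : 𝕃² ≃ₗᵢ[ℂ] 𝕃²}
    (hΦ : IsFourierExtension Φ) {R : ℝ} (hR : 0 ≤ R) (R' : ℝ) :
    TotallyBounded ((fun f => ballCutoff n R' (Φ (ballCutoff n R f))) '' closedBall 0 1) := by
  set B := closedBall (0 : 𝔼) R
  set K := closedBall (0 : 𝔼) R'
  have : CompactSpace K := isCompact_iff_compactSpace.1 (isCompact_closedBall 0 R')
  set c := (2 * π) ^ (-(n : ℝ) / 2)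
  set V := (volume B ^ (1 / 2 : ℝ)).toReal
  have hL1 : ∀ f ∈ closedBall (0 : 𝕃²) 1, ∫ x, ‖B.indicator f x‖ ≤ V := fun f hf =>
    (Lp.integral_norm_indicator_le f measurableSet_closedBall measure_closedBall_lt_top.ne).trans
      (mul_le_of_le_one_left ENNReal.toReal_nonneg (mem_closedBall_zero_iff.1 hf))
  let H : 𝕃² → K →ᵇ ℂ := fun f => .mkOfCompact
    ((⟨_, (lipschitzWith_FT_indicator_closedBall R f).continuous⟩ : C(𝔼, ℂ)).restrict K)
  have hH : TotallyBounded (H '' closedBall 0 1) := by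
    refine (BoundedContinuousFunction.totallyBounded_setOf_lipschitzWith
      (isCompact_closedBall (0 : ℂ) (c * V)) (c * (R * V)).toNNReal).subset ?_
    rintro _ ⟨f, hf, rfl⟩
    refine ⟨((lipschitzWith_FT_indicator_closedBall R f).comp
      (LipschitzWith.subtype_val K)).weaken ?_, fun ξ =>
        mem_closedBall_zero_iff.2 ((norm_FT_le _ _).trans (by gcongr; exact hL1 f hf))⟩
    rw [mul_one]
    exact Real.toNNReal_le_toNNReal (by gcongr; exact hL1 f hf)
  refine hH.image_of_dist_le_mul (volume K ^ (1 / 2 : ℝ)).toNNReal fun f _ g _ => ?_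
  rw [Lp.dist_def, eLpNorm_congr_ae ((hΦ.ballCutoff_ae_eq R R' f).sub
    (hΦ.ballCutoff_ae_eq R R' g)), ← indicator_sub']
  refine ENNReal.toReal_le_of_le_ofReal (by positivity) ((eLpNorm_indicator_sub_le_of_dist_bdd
    volume (by norm_num) measurableSet_closedBall dist_nonneg fun ξ hξ =>
      (H f).dist_coe_le_dist (g := H g) ⟨ξ, hξ⟩).trans ?_)
  rw [ENNReal.ofReal_mul (by positivity), ENNReal.ofReal_coe_nnreal, ENNReal.coe_toNNReal
    (ENNReal.rpow_lt_top_of_nonneg (by norm_num) measure_closedBall_lt_top.ne).ne, mul_comm]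
  norm_num

theorem totallyBounded_wgtMul_fourier_image {s₁ s₂ : ℝ} (h₁ : 0 < s₁) (h₂ : s₂ < 0)
    {Φ : 𝕃² ≃ₗᵢ[ℂ] 𝕃²} (hΦ : IsFourierExtension Φ) :
    TotallyBounded ((fun g => wgtMul n h₂.le (Φ g)) ''
      {g : 𝕃² | eLpNorm (fun x => (wgt n s₁ x : ℂ) * g x) 2 volume ≤ 1}) := by
  refine Metric.totallyBounded_of_forall_exists_dist_le fun δ hδ => ?_
  set R := (δ / 2) ^ (-s₁)⁻¹
  set C : 𝕃² → 𝕃² := fun f => ballCutoff n ((δ / 2) ^ s₂⁻¹) (Φ (ballCutoff n R f))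
  refine ⟨wgtMul n h₂.le '' (C '' closedBall 0 1),
    (totallyBounded_ballCutoff_fourier_ballCutoff hΦ (by positivity) _).image
      (wgtMul n h₂.le).uniformContinuous, ?_⟩
  rintro _ ⟨g, hg, rfl⟩
  have hg1 : ‖g‖ ≤ 1 := ENNReal.toReal_le_of_le_ofReal zero_le_one
    (by simpa using (eLpNorm_le_eLpNorm_wgt_mul h₁.le g 2).trans hg)
  refine ⟨_, mem_image_of_mem _ (mem_image_of_mem C (mem_closedBall_zero_iff.2 hg1)), ?_⟩
  calc dist (wgtMul n h₂.le (Φ g)) (wgtMul n h₂.le (C g))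
      ≤ dist (wgtMul n h₂.le (Φ g)) (wgtMul n h₂.le (Φ (ballCutoff n R g)))
        + dist (wgtMul n h₂.le (Φ (ballCutoff n R g))) (wgtMul n h₂.le (C g)) :=
        dist_triangle _ _ _
    _ ≤ δ / 2 + δ / 2 := add_le_add ?_ ?_
    _ = δ := add_halves δ
  · rw [dist_eq_norm, ← map_sub, ← map_sub]
    refine (norm_wgtMul_le _ _).trans ?_
    rw [LinearIsometryEquiv.norm_map, ← ENNReal.ofReal_le_ofReal_iff (half_pos hδ).le,
      ofReal_norm]
    refine (enorm_sub_ballCutoff_le h₁ (half_pos hδ) g).trans ?_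
    exact mul_le_of_le_one_right bot_le hg
  · rw [dist_eq_norm, ← map_sub]
    refine (norm_wgtMul_sub_ballCutoff_le h₂ (half_pos hδ) _).trans ?_
    rw [LinearIsometryEquiv.norm_map]
    exact mul_le_of_le_one_right (half_pos hδ).le ((norm_ballCutoff_le R g).trans hg1)

end Operators

/-- `Φ` is the Plancherel extension of the Fourier transform to `L²`, so that
`‖f‖_{H^s} = ‖w_s · Φ f‖₂`; compactness is expressed as total boundedness of the image of the
`H^{s₁}`-unit ball in the `H^{s₂}` norm. -/
theorem fourier_compact_Hs (n : ℕ) (s₁ s₂ : ℝ) (h₁ : 0 < s₁) (h₂ : s₂ < 0)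
    (Φ : Lp ℂ 2 (volume : Measure (EuclideanSpace ℝ (Fin n))) ≃ₗᵢ[ℂ]
         Lp ℂ 2 (volume : Measure (EuclideanSpace ℝ (Fin n))))
    (hΦ : ∀ (f : EuclideanSpace ℝ (Fin n) → ℂ) (hf : Integrable f volume)
      (h2 : MemLp f 2 volume),
      (Φ (h2.toLp f) : EuclideanSpace ℝ (Fin n) → ℂ) =ᵐ[volume] FT n f) :
    ∀ ε : ℝ≥0∞, 0 < ε →
      ∃ S : Finset (Lp ℂ 2 (volume : Measure (EuclideanSpace ℝ (Fin n)))),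
        ∀ u : Lp ℂ 2 (volume : Measure (EuclideanSpace ℝ (Fin n))),
          eLpNorm (fun ξ => (wgt n s₁ ξ : ℂ) * (Φ u : EuclideanSpace ℝ (Fin n) → ℂ) ξ)
              2 volume ≤ 1 →
            ∃ v ∈ S,
              eLpNorm (fun ξ => (wgt n s₂ ξ : ℂ) *
                  (Φ (Φ u - v) : EuclideanSpace ℝ (Fin n) → ℂ) ξ) 2 volume < ε := by
  intro ε hε
  obtain ⟨S, hS⟩ :=
    (totallyBounded_wgtMul_fourier_image h₁ h₂ hΦ).exists_finset_edist_image_lt hε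
  refine ⟨S, fun u hu => ?_⟩
  obtain ⟨v, hvS, hv⟩ := hS (Φ u) hu
  refine ⟨v, hvS, lt_of_eq_of_lt ?_ hv⟩
  rw [edist_eq_enorm_sub, ← map_sub, ← map_sub, Lp.enorm_def]
  exact eLpNorm_congr_ae (coeFn_wgtMul h₂.le _).symm
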